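/- Let slDs be the first-order operator acting on smooth functions phi : (0,π) × (0,2π) → ℂ^2 by slDs phi = i*sigma_x*(∂_theta phi + (cot(theta)/2)*phi) - i*sigma_y*(1/sin(theta))*∂_phi_angle phi, and define the spinorial first Sobolev squared norm N(phi) := ∫ ( |phi|^2 + |∂_theta phi|^2 + |(1/sin(theta))*∂_phi_angle phi + i*sigma_z*(cot(theta)/2)*phi|^2 ) sin(theta) dtheta dphi_angle, the integral being over (0,π) × (0,2π). Then for every smooth compactly supported phi : (0,π) × (0,2π) → ℂ^2 one has the two-sided estimate ∫ |slDs phi|^2 sin(theta) dtheta dphi_angle ≤ N(phi) ≤ 2 * ∫ |slDs phi|^2 sin(theta) dtheta dphi_angle; in particular the norm phi ↦ ‖slDs phi‖_{L^2} is equivalent to the spinorial H^1 norm. -/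

import Mathlib

noncomputable section

open Complex MeasureTheory

/-- The Pauli matrix `σ_x`. -/
def sigmaX : Matrix (Fin 2) (Fin 2) ℂ := !![0, 1; 1, 0]

/-- The Pauli matrix `σ_y`. -/
def sigmaY : Matrix (Fin 2) (Fin 2) ℂ := !![0, -I; I, 0]

/-- The Pauli matrix `σ_z`. -/
def sigmaZ : Matrix (Fin 2) (Fin 2) ℂ := !![1, 0; 0, -1]

/-- Partial derivative in the first variable `θ`. -/
def pdTheta (phi : ℝ × ℝ → Fin 2 → ℂ) (p : ℝ × ℝ) : Fin 2 → ℂ :=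
  deriv (fun t : ℝ => phi (t, p.2)) p.1

/-- Partial derivative in the second variable `φ`. -/
def pdPhi (phi : ℝ × ℝ → Fin 2 → ℂ) (p : ℝ × ℝ) : Fin 2 → ℂ :=
  deriv (fun t : ℝ => phi (p.1, t)) p.2

/-- The Dirac operator on the 2-sphere acting on spinors. -/
def slDs (phi : ℝ × ℝ → Fin 2 → ℂ) (p : ℝ × ℝ) : Fin 2 → ℂ :=
  I • sigmaX.mulVec
      (pdTheta phi p + ((Real.cos p.1 / Real.sin p.1 / 2 : ℝ) : ℂ) • phi p) -
    I • sigmaY.mulVec ((((Real.sin p.1)⁻¹ : ℝ) : ℂ) • pdPhi phi p)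

/-- Squared `ℂ²` norm. -/
def nsq (v : Fin 2 → ℂ) : ℝ := ∑ i, Complex.normSq (v i)

/-- The coordinate rectangle `(0,π) × (0,2π)` of the sphere. -/
def sphereRect : Set (ℝ × ℝ) := Set.Ioo 0 Real.pi ×ˢ Set.Ioo 0 (2 * Real.pi)

/-- The spinorial covariant derivative `∇_{e₂} φ = (1/sinθ)∂_φ φ + i σ_z (cotθ/2) φ`. -/
def covE2 (phi : ℝ × ℝ → Fin 2 → ℂ) (p : ℝ × ℝ) : Fin 2 → ℂ :=
  (((Real.sin p.1)⁻¹ : ℝ) : ℂ) • pdPhi phi p +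
    (I * ((Real.cos p.1 / Real.sin p.1 / 2 : ℝ) : ℂ)) • sigmaZ.mulVec (phi p)


/-- The squared spinorial first Sobolev norm `N(φ)`. -/
def sobN (phi : ℝ × ℝ → Fin 2 → ℂ) : ℝ :=
  ∫ p in sphereRect,
    (nsq (phi p) + nsq (pdTheta phi p) + nsq (covE2 phi p)) * Real.sin p.1

/-! ### Auxiliary material -/

section Aux

variable {F : Type*} [NormedAddCommGroup F] [NormedSpace ℝ F]

/-- Partial derivative in the first variable, generic codomain. -/
def pd1 (f : ℝ × ℝ → F) (p : ℝ × ℝ) : F := deriv (fun t => f (t, p.2)) p.1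

/-- Partial derivative in the second variable, generic codomain. -/
def pd2 (f : ℝ × ℝ → F) (p : ℝ × ℝ) : F := deriv (fun t => f (p.1, t)) p.2

lemma pd1_eq_fderiv {f : ℝ × ℝ → F} (hf : Differentiable ℝ f) (p : ℝ × ℝ) :
    pd1 f p = fderiv ℝ f p (1, 0) := by
  have h1 : HasDerivAt (fun t : ℝ => (t, p.2)) ((1:ℝ), (0:ℝ)) p.1 :=
    (hasDerivAt_id p.1).prodMk (hasDerivAt_const _ _)
  have h := ((hf p).hasFDerivAt).comp_hasDerivAt p.1 h1
  simpa [pd1, Function.comp_def] using h.deriv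

lemma pd2_eq_fderiv {f : ℝ × ℝ → F} (hf : Differentiable ℝ f) (p : ℝ × ℝ) :
    pd2 f p = fderiv ℝ f p (0, 1) := by
  have h1 : HasDerivAt (fun t : ℝ => (p.1, t)) ((0:ℝ), (1:ℝ)) p.2 :=
    (hasDerivAt_const _ _).prodMk (hasDerivAt_id p.2)
  have h := ((hf p).hasFDerivAt).comp_hasDerivAt p.2 h1
  simpa [pd2, Function.comp_def] using h.deriv

lemma hasDerivAt_pd1 {f : ℝ × ℝ → F} (hf : Differentiable ℝ f) (p : ℝ × ℝ) :
    HasDerivAt (fun t => f (t, p.2)) (pd1 f p) p.1 := by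
  have h1 : HasDerivAt (fun t : ℝ => (t, p.2)) ((1:ℝ), (0:ℝ)) p.1 :=
    (hasDerivAt_id p.1).prodMk (hasDerivAt_const _ _)
  have h := ((hf p).hasFDerivAt).comp_hasDerivAt p.1 h1
  rw [pd1_eq_fderiv hf]
  simpa [Function.comp_def] using h

lemma hasDerivAt_pd2 {f : ℝ × ℝ → F} (hf : Differentiable ℝ f) (p : ℝ × ℝ) :
    HasDerivAt (fun t => f (p.1, t)) (pd2 f p) p.2 := by
  have h1 : HasDerivAt (fun t : ℝ => (p.1, t)) ((0:ℝ), (1:ℝ)) p.2 :=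
    (hasDerivAt_const _ _).prodMk (hasDerivAt_id p.2)
  have h := ((hf p).hasFDerivAt).comp_hasDerivAt p.2 h1
  rw [pd2_eq_fderiv hf]
  simpa [Function.comp_def] using h

lemma contDiff_pd1 {f : ℝ × ℝ → F} (hf : ContDiff ℝ (⊤ : ℕ∞) f) : ContDiff ℝ (⊤ : ℕ∞) (pd1 f) := by
  have : pd1 f = fun p => fderiv ℝ f p (1, 0) := funext (pd1_eq_fderiv (hf.differentiable (by simp)))
  rw [this]
  exact (ContinuousLinearMap.apply ℝ F ((1:ℝ),(0:ℝ))).contDiff.comp (hf.fderiv_right (by simp))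

lemma contDiff_pd2 {f : ℝ × ℝ → F} (hf : ContDiff ℝ (⊤ : ℕ∞) f) : ContDiff ℝ (⊤ : ℕ∞) (pd2 f) := by
  have : pd2 f = fun p => fderiv ℝ f p (0, 1) := funext (pd2_eq_fderiv (hf.differentiable (by simp)))
  rw [this]
  exact (ContinuousLinearMap.apply ℝ F ((0:ℝ),(1:ℝ))).contDiff.comp (hf.fderiv_right (by simp))

lemma pd1_pd2_comm {f : ℝ × ℝ → F} (hf : ContDiff ℝ (⊤ : ℕ∞) f) (p : ℝ × ℝ) :
    pd1 (pd2 f) p = pd2 (pd1 f) p := by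
  have hdf : Differentiable ℝ f := hf.differentiable (by simp)
  have hfd : ContDiff ℝ (⊤ : ℕ∞) (fderiv ℝ f) := hf.fderiv_right (by simp)
  have h2 : HasFDerivAt (fderiv ℝ f) (fderiv ℝ (fderiv ℝ f) p) p :=
    (hfd.differentiable (by simp) p).hasFDerivAt
  have hsymm := second_derivative_symmetric (fun y => (hdf y).hasFDerivAt) h2
  have e1 : pd1 (pd2 f) p = fderiv ℝ (fderiv ℝ f) p (1,0) (0,1) := by
    rw [pd1_eq_fderiv (by
      have : pd2 f = fun p => fderiv ℝ f p (0, 1) := funext (pd2_eq_fderiv hdf)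
      rw [this]
      exact ((ContinuousLinearMap.apply ℝ F ((0:ℝ),(1:ℝ))).contDiff.comp hfd).differentiable (by simp)) p]
    have hc : pd2 f = fun p => fderiv ℝ f p (0, 1) := funext (pd2_eq_fderiv hdf)
    rw [hc]
    rw [fderiv_clm_apply (hfd.differentiable (by simp) p) (differentiable_const _ p)]
    simp
  have e2 : pd2 (pd1 f) p = fderiv ℝ (fderiv ℝ f) p (0,1) (1,0) := by
    rw [pd2_eq_fderiv (by
      have : pd1 f = fun p => fderiv ℝ f p (1, 0) := funext (pd1_eq_fderiv hdf)
      rw [this]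
      exact ((ContinuousLinearMap.apply ℝ F ((1:ℝ),(0:ℝ))).contDiff.comp hfd).differentiable (by simp)) p]
    have hc : pd1 f = fun p => fderiv ℝ f p (1, 0) := funext (pd1_eq_fderiv hdf)
    rw [hc]
    rw [fderiv_clm_apply (hfd.differentiable (by simp) p) (differentiable_const _ p)]
    simp
  rw [e1, e2, hsymm]

/-! one-dimensional integration by parts, compactly supported case -/

lemma oneDim_ibp (g g' : ℝ → ℝ) (hg : ∀ t, HasDerivAt g (g' t) t)
    (hs : HasCompactSupport g) (hc : Continuous g') : ∫ t, g' t = 0 := by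
  obtain ⟨r, hr0, hr⟩ := hs.isBounded.subset_closedBall_lt 0 0
  have hIcc : tsupport g ⊆ Set.Icc (-r) r := by
    rwa [Real.closedBall_eq_Icc, zero_sub, zero_add] at hr
  have hzero : ∀ x ∉ Set.Ioc (-r - 1) (r + 1), g' x = 0 := by
    intro x hx
    have hxn : x ∉ tsupport g := by
      intro hmem
      exact hx ⟨by linarith [(hIcc hmem).1], by linarith [(hIcc hmem).2]⟩
    have hev : g =ᶠ[nhds x] 0 := by
      have : (tsupport g)ᶜ ∈ nhds x := (isClosed_tsupport g).isOpen_compl.mem_nhds hxn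
      filter_upwards [this] with y hy
      exact image_eq_zero_of_notMem_tsupport hy
    have := (hg x).deriv
    rw [← this, hev.deriv_eq]
    exact deriv_const x 0
  have h1 : ∫ t, g' t = ∫ t in Set.Ioc (-r - 1) (r + 1), g' t :=
    (setIntegral_eq_integral_of_forall_compl_eq_zero hzero).symm
  have hle : (-r - 1 : ℝ) ≤ r + 1 := by linarith
  rw [h1, ← intervalIntegral.integral_of_le hle]
  have hFTC := intervalIntegral.integral_eq_sub_of_hasDerivAt
    (f := g) (f' := g') (a := -r - 1) (b := r + 1)
    (fun x _ => hg x) (hc.intervalIntegrable _ _)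
  rw [hFTC]
  have hga : g (-r - 1) = 0 := image_eq_zero_of_notMem_tsupport (by
    intro hmem; have := hIcc hmem; simp at this; linarith [this.1])
  have hgb : g (r + 1) = 0 := image_eq_zero_of_notMem_tsupport (by
    intro hmem; have := hIcc hmem; simp at this; linarith [this.2])
  rw [hga, hgb, sub_zero]

lemma slice_compact_fst {K : Set (ℝ × ℝ)} (hK : IsCompact K) (y : ℝ)
    {g : ℝ → ℝ} (hg : ∀ t, (t, y) ∉ K → g t = 0) : HasCompactSupport g := by
  apply IsCompact.of_isClosed_subset (hK.image continuous_fst) (isClosed_tsupport g)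
  apply closure_minimal _ (hK.image continuous_fst).isClosed
  intro t ht
  rcases Classical.em ((t, y) ∈ K) with h | h
  · exact ⟨(t, y), h, rfl⟩
  · exact absurd (hg t h) ht

lemma slice_compact_snd {K : Set (ℝ × ℝ)} (hK : IsCompact K) (x : ℝ)
    {g : ℝ → ℝ} (hg : ∀ t, (x, t) ∉ K → g t = 0) : HasCompactSupport g := by
  apply IsCompact.of_isClosed_subset (hK.image continuous_snd) (isClosed_tsupport g)
  apply closure_minimal _ (hK.image continuous_snd).isClosed
  intro t ht
  rcases Classical.em ((x, t) ∈ K) with h | h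
  · exact ⟨(x, t), h, rfl⟩
  · exact absurd (hg t h) ht

lemma deriv1_vanish {K : Set (ℝ × ℝ)} (hKc : IsClosed K) {W W' : ℝ × ℝ → ℝ}
    (hW : ∀ p, HasDerivAt (fun t => W (t, p.2)) (W' p) p.1)
    (hW0 : ∀ p ∉ K, W p = 0) {p : ℝ × ℝ} (hp : p ∉ K) : W' p = 0 := by
  have hev : (fun t => W (t, p.2)) =ᶠ[nhds p.1] 0 := by
    have hopen : IsOpen ((fun t : ℝ => (t, p.2)) ⁻¹' Kᶜ) :=
      hKc.isOpen_compl.preimage (by fun_prop)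
    filter_upwards [hopen.mem_nhds hp] with t ht
    exact hW0 _ ht
  have := (hW p).deriv
  rw [← this, hev.deriv_eq]
  exact deriv_const p.1 0

lemma deriv2_vanish {K : Set (ℝ × ℝ)} (hKc : IsClosed K) {W W' : ℝ × ℝ → ℝ}
    (hW : ∀ p, HasDerivAt (fun t => W (p.1, t)) (W' p) p.2)
    (hW0 : ∀ p ∉ K, W p = 0) {p : ℝ × ℝ} (hp : p ∉ K) : W' p = 0 := by
  have hev : (fun t => W (p.1, t)) =ᶠ[nhds p.2] 0 := by
    have hopen : IsOpen ((fun t : ℝ => (p.1, t)) ⁻¹' Kᶜ) :=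
      hKc.isOpen_compl.preimage (by fun_prop)
    filter_upwards [hopen.mem_nhds hp] with t ht
    exact hW0 _ ht
  have := (hW p).deriv
  rw [← this, hev.deriv_eq]
  exact deriv_const p.2 0

lemma integral_deriv1_zero {K : Set (ℝ × ℝ)} (hK : IsCompact K) {W W' : ℝ × ℝ → ℝ}
    (hW : ∀ p, HasDerivAt (fun t => W (t, p.2)) (W' p) p.1)
    (hW0 : ∀ p ∉ K, W p = 0) (hW'c : Continuous W') :
    ∫ p : ℝ × ℝ, W' p = 0 := by
  have hvan : ∀ p ∉ K, W' p = 0 := fun p hp => deriv1_vanish hK.isClosed hW hW0 hp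
  have hcs : HasCompactSupport W' := HasCompactSupport.intro hK hvan
  have hint : Integrable W' := hW'c.integrable_of_hasCompactSupport hcs
  rw [MeasureTheory.Measure.volume_eq_prod] at hint ⊢
  rw [MeasureTheory.integral_prod_symm _ hint]
  have h0 : ∀ y : ℝ, ∫ x : ℝ, W' (x, y) = 0 := by
    intro y
    apply oneDim_ibp (fun t => W (t, y)) (fun t => W' (t, y)) (fun t => hW (t, y))
    · exact slice_compact_fst hK y (fun t ht => hW0 _ ht)
    · exact hW'c.comp (by fun_prop)
  simp [h0]

lemma integral_deriv2_zero {K : Set (ℝ × ℝ)} (hK : IsCompact K) {W W' : ℝ × ℝ → ℝ}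
    (hW : ∀ p, HasDerivAt (fun t => W (p.1, t)) (W' p) p.2)
    (hW0 : ∀ p ∉ K, W p = 0) (hW'c : Continuous W') :
    ∫ p : ℝ × ℝ, W' p = 0 := by
  have hvan : ∀ p ∉ K, W' p = 0 := fun p hp => deriv2_vanish hK.isClosed hW hW0 hp
  have hcs : HasCompactSupport W' := HasCompactSupport.intro hK hvan
  have hint : Integrable W' := hW'c.integrable_of_hasCompactSupport hcs
  rw [MeasureTheory.Measure.volume_eq_prod] at hint ⊢
  rw [MeasureTheory.integral_prod _ hint]
  have h0 : ∀ x : ℝ, ∫ y : ℝ, W' (x, y) = 0 := by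
    intro x
    apply oneDim_ibp (fun t => W (x, t)) (fun t => W' (x, t)) (fun t => hW (x, t))
    · exact slice_compact_snd hK x (fun t ht => hW0 _ ht)
    · exact hW'c.comp (by fun_prop)
  simp [h0]

/-! calculus helpers over ℂ -/

lemma HasDerivAt.complexIm {f : ℝ → ℂ} {f' : ℂ} {x : ℝ} (h : HasDerivAt f f' x) :
    HasDerivAt (fun t => (f t).im) f'.im x :=
  (Complex.imCLM.hasFDerivAt.comp_hasDerivAt x h)

lemma HasDerivAt.complexRe {f : ℝ → ℂ} {f' : ℂ} {x : ℝ} (h : HasDerivAt f f' x) :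
    HasDerivAt (fun t => (f t).re) f'.re x :=
  (Complex.reCLM.hasFDerivAt.comp_hasDerivAt x h)

lemma hasDerivAt_conj_mul {f g : ℝ → ℂ} {f' g' : ℂ} {x : ℝ}
    (hf : HasDerivAt f f' x) (hg : HasDerivAt g g' x) :
    HasDerivAt (fun t => (starRingEnd ℂ) (f t) * g t)
      ((starRingEnd ℂ) f' * g x + (starRingEnd ℂ) (f x) * g') x := by
  have := hf.star.mul hg
  simpa [Complex.star_def, Pi.mul_def] using this

lemma normSq_eq_re (z : ℂ) : Complex.normSq z = ((starRingEnd ℂ) z * z).re := by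
  rw [← Complex.normSq_eq_conj_mul_self, Complex.ofReal_re]

lemma hasDerivAt_normSq {f : ℝ → ℂ} {f' : ℂ} {x : ℝ} (hf : HasDerivAt f f' x) :
    HasDerivAt (fun t => Complex.normSq (f t)) (2 * ((starRingEnd ℂ) (f x) * f').re) x := by
  have h := (hasDerivAt_conj_mul hf hf).complexRe
  have heq : (fun t => ((starRingEnd ℂ) (f t) * f t).re) = fun t => Complex.normSq (f t) := by
    funext t; rw [normSq_eq_re]
  rw [heq] at h
  convert h using 1
  simp [Complex.add_re, Complex.mul_re, Complex.conj_re, Complex.conj_im]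
  ring

/-! the core pointwise algebraic identity -/

lemma keyAlg (a b u0 u1 w0 w1 m0 m1 : ℂ) (s co : ℝ) (hs : s ≠ 0) :
    (normSq (I*u1 - (((s⁻¹:ℝ):ℂ) * w1 - (I * ((co/s/2:ℝ):ℂ)) * b))
      + normSq (I*u0 + (((s⁻¹:ℝ):ℂ) * w0 + (I * ((co/s/2:ℝ):ℂ)) * a))) * s
    = ((normSq a + normSq b)/2 + (normSq u0 + normSq u1)
        + (normSq (((s⁻¹:ℝ):ℂ) * w0 + (I * ((co/s/2:ℝ):ℂ)) * a)
           + normSq (((s⁻¹:ℝ):ℂ) * w1 - (I * ((co/s/2:ℝ):ℂ)) * b))) * s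
      + (((starRingEnd ℂ) u0 * w0).im + ((starRingEnd ℂ) a * m0).im
          - ((starRingEnd ℂ) u1 * w1).im - ((starRingEnd ℂ) b * m1).im
          - s/2*(normSq a + normSq b)
          + co/2*(2*((starRingEnd ℂ) a * u0).re + 2*((starRingEnd ℂ) b * u1).re))
      - (((starRingEnd ℂ) w0 * u0).im + ((starRingEnd ℂ) a * m0).im
          - ((starRingEnd ℂ) w1 * u1).im - ((starRingEnd ℂ) b * m1).im) := by
  simp only [normSq_apply, mul_re, mul_im, sub_re, sub_im, add_re, add_im,
    I_re, I_im, ofReal_re, ofReal_im, conj_re, conj_im]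
  field_simp
  ring

end Aux

section Main

/-- `i`-th component of the spinor. -/
def spc (phi : ℝ × ℝ → Fin 2 → ℂ) (i : Fin 2) : ℝ × ℝ → ℂ := fun q => phi q i

/-- potential for the `θ`-direction boundary term -/
def Wfun (phi : ℝ × ℝ → Fin 2 → ℂ) (p : ℝ × ℝ) : ℝ :=
  ((starRingEnd ℂ) (phi p 0) * pd2 (spc phi 0) p).im
    - ((starRingEnd ℂ) (phi p 1) * pd2 (spc phi 1) p).im
    + Real.cos p.1 / 2 * (Complex.normSq (phi p 0) + Complex.normSq (phi p 1))

/-- its `θ`-derivative -/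
def Wd (phi : ℝ × ℝ → Fin 2 → ℂ) (p : ℝ × ℝ) : ℝ :=
  ((starRingEnd ℂ) (pd1 (spc phi 0) p) * pd2 (spc phi 0) p).im
    + ((starRingEnd ℂ) (phi p 0) * pd1 (pd2 (spc phi 0)) p).im
    - ((starRingEnd ℂ) (pd1 (spc phi 1) p) * pd2 (spc phi 1) p).im
    - ((starRingEnd ℂ) (phi p 1) * pd1 (pd2 (spc phi 1)) p).im
    - Real.sin p.1 / 2 * (Complex.normSq (phi p 0) + Complex.normSq (phi p 1))
    + Real.cos p.1 / 2 * (2 * ((starRingEnd ℂ) (phi p 0) * pd1 (spc phi 0) p).re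
        + 2 * ((starRingEnd ℂ) (phi p 1) * pd1 (spc phi 1) p).re)

/-- potential for the `φ`-direction boundary term -/
def Qfun (phi : ℝ × ℝ → Fin 2 → ℂ) (p : ℝ × ℝ) : ℝ :=
  ((starRingEnd ℂ) (phi p 0) * pd1 (spc phi 0) p).im
    - ((starRingEnd ℂ) (phi p 1) * pd1 (spc phi 1) p).im

/-- its `φ`-derivative -/
def Qd (phi : ℝ × ℝ → Fin 2 → ℂ) (p : ℝ × ℝ) : ℝ :=
  ((starRingEnd ℂ) (pd2 (spc phi 0) p) * pd1 (spc phi 0) p).im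
    + ((starRingEnd ℂ) (phi p 0) * pd2 (pd1 (spc phi 0)) p).im
    - ((starRingEnd ℂ) (pd2 (spc phi 1) p) * pd1 (spc phi 1) p).im
    - ((starRingEnd ℂ) (phi p 1) * pd2 (pd1 (spc phi 1)) p).im

variable {phi : ℝ × ℝ → Fin 2 → ℂ}

lemma contDiff_spc (hsm : ContDiff ℝ (⊤ : ℕ∞) phi) (i : Fin 2) : ContDiff ℝ (⊤ : ℕ∞) (spc phi i) :=
  (ContinuousLinearMap.proj (R := ℝ) (φ := fun _ : Fin 2 => ℂ) i).contDiff.comp hsm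

lemma pdTheta_apply (hsm : ContDiff ℝ (⊤ : ℕ∞) phi) (p : ℝ × ℝ) (i : Fin 2) :
    pdTheta phi p i = pd1 (spc phi i) p := by
  have hv := hasDerivAt_pd1 (hsm.differentiable (by simp)) p
  have hcomp := hasDerivAt_pi.mp hv i
  have hs := hasDerivAt_pd1 ((contDiff_spc hsm i).differentiable (by simp)) p
  exact hcomp.unique hs

lemma pdPhi_apply (hsm : ContDiff ℝ (⊤ : ℕ∞) phi) (p : ℝ × ℝ) (i : Fin 2) :
    pdPhi phi p i = pd2 (spc phi i) p := by
  have hv := hasDerivAt_pd2 (hsm.differentiable (by simp)) p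
  have hcomp := hasDerivAt_pi.mp hv i
  have hs := hasDerivAt_pd2 ((contDiff_spc hsm i).differentiable (by simp)) p
  exact hcomp.unique hs

lemma slDs_comp0 (p : ℝ × ℝ) :
    slDs phi p 0 = I * pdTheta phi p 1
      - (((Real.sin p.1)⁻¹ : ℝ) * pdPhi phi p 1
          - (I * ((Real.cos p.1 / Real.sin p.1 / 2 : ℝ) : ℂ)) * phi p 1) := by
  simp [slDs, sigmaX, sigmaY, Matrix.mulVec, dotProduct, Fin.sum_univ_two,
    Matrix.cons_val_zero, Matrix.cons_val_one, Matrix.head_cons, Pi.add_apply, Pi.smul_apply,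
    smul_eq_mul]
  ring_nf
  simp [Complex.I_sq]
  ring

lemma slDs_comp1 (p : ℝ × ℝ) :
    slDs phi p 1 = I * pdTheta phi p 0
      + (((Real.sin p.1)⁻¹ : ℝ) * pdPhi phi p 0
          + (I * ((Real.cos p.1 / Real.sin p.1 / 2 : ℝ) : ℂ)) * phi p 0) := by
  simp [slDs, sigmaX, sigmaY, Matrix.mulVec, dotProduct, Fin.sum_univ_two,
    Matrix.cons_val_zero, Matrix.cons_val_one, Matrix.head_cons, Pi.add_apply, Pi.smul_apply,
    smul_eq_mul]
  ring_nf
  simp [Complex.I_sq]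

lemma covE2_comp0 (p : ℝ × ℝ) :
    covE2 phi p 0 = (((Real.sin p.1)⁻¹ : ℝ) : ℂ) * pdPhi phi p 0
      + (I * ((Real.cos p.1 / Real.sin p.1 / 2 : ℝ) : ℂ)) * phi p 0 := by
  simp [covE2, sigmaZ, Matrix.mulVec, dotProduct, Fin.sum_univ_two,
    Matrix.cons_val_zero, Matrix.cons_val_one, Matrix.head_cons, Pi.add_apply, Pi.smul_apply,
    smul_eq_mul]

lemma covE2_comp1 (p : ℝ × ℝ) :
    covE2 phi p 1 = (((Real.sin p.1)⁻¹ : ℝ) : ℂ) * pdPhi phi p 1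
      - (I * ((Real.cos p.1 / Real.sin p.1 / 2 : ℝ) : ℂ)) * phi p 1 := by
  simp [covE2, sigmaZ, Matrix.mulVec, dotProduct, Fin.sum_univ_two,
    Matrix.cons_val_zero, Matrix.cons_val_one, Matrix.head_cons, Pi.add_apply, Pi.smul_apply,
    smul_eq_mul]
  ring

lemma nsq_two (v : Fin 2 → ℂ) : nsq v = Complex.normSq (v 0) + Complex.normSq (v 1) := by
  simp [nsq, Fin.sum_univ_two]

end Main

section Main2
variable {phi : ℝ × ℝ → Fin 2 → ℂ}

lemma hasDerivAt_Wfun (hsm : ContDiff ℝ (⊤ : ℕ∞) phi) (p : ℝ × ℝ) :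
    HasDerivAt (fun t => Wfun phi (t, p.2)) (Wd phi p) p.1 := by
  have hc0 := contDiff_spc hsm 0
  have hc1 := contDiff_spc hsm 1
  have hd0 : Differentiable ℝ (spc phi 0) := hc0.differentiable (by simp)
  have hd1 : Differentiable ℝ (spc phi 1) := hc1.differentiable (by simp)
  have hw0 : Differentiable ℝ (pd2 (spc phi 0)) := (contDiff_pd2 hc0).differentiable (by simp)
  have hw1 : Differentiable ℝ (pd2 (spc phi 1)) := (contDiff_pd2 hc1).differentiable (by simp)
  have h0 := (hasDerivAt_conj_mul (hasDerivAt_pd1 hd0 p) (hasDerivAt_pd1 hw0 p)).complexIm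
  have h1 := (hasDerivAt_conj_mul (hasDerivAt_pd1 hd1 p) (hasDerivAt_pd1 hw1 p)).complexIm
  have hn0 := hasDerivAt_normSq (hasDerivAt_pd1 hd0 p)
  have hn1 := hasDerivAt_normSq (hasDerivAt_pd1 hd1 p)
  have hcos := (Real.hasDerivAt_cos p.1).div_const 2
  have htot := (h0.sub h1).add (hcos.mul (hn0.add hn1))
  refine htot.congr_deriv ?_
  simp only [Wd, Complex.add_im, spc, Pi.add_apply]
  ring

lemma hasDerivAt_Qfun (hsm : ContDiff ℝ (⊤ : ℕ∞) phi) (p : ℝ × ℝ) :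
    HasDerivAt (fun t => Qfun phi (p.1, t)) (Qd phi p) p.2 := by
  have hc0 := contDiff_spc hsm 0
  have hc1 := contDiff_spc hsm 1
  have hd0 : Differentiable ℝ (spc phi 0) := hc0.differentiable (by simp)
  have hd1 : Differentiable ℝ (spc phi 1) := hc1.differentiable (by simp)
  have hu0 : Differentiable ℝ (pd1 (spc phi 0)) := (contDiff_pd1 hc0).differentiable (by simp)
  have hu1 : Differentiable ℝ (pd1 (spc phi 1)) := (contDiff_pd1 hc1).differentiable (by simp)
  have h0 := (hasDerivAt_conj_mul (hasDerivAt_pd2 hd0 p) (hasDerivAt_pd2 hu0 p)).complexIm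
  have h1 := (hasDerivAt_conj_mul (hasDerivAt_pd2 hd1 p) (hasDerivAt_pd2 hu1 p)).complexIm
  have htot := h0.sub h1
  refine htot.congr_deriv ?_
  simp only [Qd, Complex.add_im, spc]
  ring

lemma pointwise_identity (hsm : ContDiff ℝ (⊤ : ℕ∞) phi) {p : ℝ × ℝ} (hp : p ∈ sphereRect) :
    nsq (slDs phi p) * Real.sin p.1
      = (nsq (phi p) / 2 + nsq (pdTheta phi p) + nsq (covE2 phi p)) * Real.sin p.1
        + Wd phi p - Qd phi p := by
  have hθ : 0 < p.1 ∧ p.1 < Real.pi := ⟨hp.1.1, hp.1.2⟩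
  have hs : Real.sin p.1 ≠ 0 := ne_of_gt (Real.sin_pos_of_pos_of_lt_pi hθ.1 hθ.2)
  have key := keyAlg (phi p 0) (phi p 1) (pd1 (spc phi 0) p) (pd1 (spc phi 1) p)
    (pd2 (spc phi 0) p) (pd2 (spc phi 1) p)
    (pd1 (pd2 (spc phi 0)) p) (pd1 (pd2 (spc phi 1)) p)
    (Real.sin p.1) (Real.cos p.1) hs
  rw [nsq_two, nsq_two, nsq_two, nsq_two, slDs_comp0, slDs_comp1, covE2_comp0, covE2_comp1,
    pdTheta_apply hsm p 0, pdTheta_apply hsm p 1, pdPhi_apply hsm p 0, pdPhi_apply hsm p 1]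
  simp only [Wd, Qd]
  rw [← pd1_pd2_comm (contDiff_spc hsm 0) p, ← pd1_pd2_comm (contDiff_spc hsm 1) p]
  linear_combination key

end Main2
section Main3
variable {F : Type*} [NormedAddCommGroup F] [NormedSpace ℝ F]

lemma vanish_pd1 {f : ℝ × ℝ → F} {K : Set (ℝ × ℝ)} (hKc : IsClosed K)
    (h0 : ∀ q ∉ K, f q = 0) {p : ℝ × ℝ} (hp : p ∉ K) : pd1 f p = 0 := by
  have hev : (fun t => f (t, p.2)) =ᶠ[nhds p.1] 0 := by
    have hopen : IsOpen ((fun t : ℝ => (t, p.2)) ⁻¹' Kᶜ) :=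
      hKc.isOpen_compl.preimage (by fun_prop)
    filter_upwards [hopen.mem_nhds hp] with t ht
    exact h0 _ ht
  rw [pd1, hev.deriv_eq]
  exact deriv_const p.1 0

lemma vanish_pd2 {f : ℝ × ℝ → F} {K : Set (ℝ × ℝ)} (hKc : IsClosed K)
    (h0 : ∀ q ∉ K, f q = 0) {p : ℝ × ℝ} (hp : p ∉ K) : pd2 f p = 0 := by
  have hev : (fun t => f (p.1, t)) =ᶠ[nhds p.2] 0 := by
    have hopen : IsOpen ((fun t : ℝ => (p.1, t)) ⁻¹' Kᶜ) :=
      hKc.isOpen_compl.preimage (by fun_prop)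
    filter_upwards [hopen.mem_nhds hp] with t ht
    exact h0 _ ht
  rw [pd2, hev.deriv_eq]
  exact deriv_const p.2 0

variable {phi : ℝ × ℝ → Fin 2 → ℂ}

lemma vanish_phi {p : ℝ × ℝ} (hp : p ∉ tsupport phi) : phi p = 0 :=
  image_eq_zero_of_notMem_tsupport hp

lemma vanish_pdTheta {p : ℝ × ℝ} (hp : p ∉ tsupport phi) : pdTheta phi p = 0 :=
  vanish_pd1 (isClosed_tsupport phi) (fun _ hq => vanish_phi hq) hp

lemma vanish_pdPhi {p : ℝ × ℝ} (hp : p ∉ tsupport phi) : pdPhi phi p = 0 :=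
  vanish_pd2 (isClosed_tsupport phi) (fun _ hq => vanish_phi hq) hp

lemma vanish_covE2 {p : ℝ × ℝ} (hp : p ∉ tsupport phi) : covE2 phi p = 0 := by
  rw [covE2, vanish_pdPhi hp, vanish_phi hp]
  simp

lemma vanish_slDs {p : ℝ × ℝ} (hp : p ∉ tsupport phi) : slDs phi p = 0 := by
  rw [slDs, vanish_pdTheta hp, vanish_pdPhi hp, vanish_phi hp]
  simp

lemma vanish_Wfun {p : ℝ × ℝ} (hp : p ∉ tsupport phi) : Wfun phi p = 0 := by
  have h := vanish_phi hp
  have h0 : phi p 0 = 0 := congrFun h 0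
  have h1 : phi p 1 = 0 := congrFun h 1
  simp [Wfun, h0, h1]

lemma vanish_Qfun {p : ℝ × ℝ} (hp : p ∉ tsupport phi) : Qfun phi p = 0 := by
  have h := vanish_phi hp
  have h0 : phi p 0 = 0 := congrFun h 0
  have h1 : phi p 1 = 0 := congrFun h 1
  simp [Qfun, h0, h1]

lemma continuous_Wd (hsm : ContDiff ℝ (⊤ : ℕ∞) phi) : Continuous (Wd phi) := by
  have c0 := (contDiff_spc hsm 0).continuous
  have c1 := (contDiff_spc hsm 1).continuous
  have u0 := (contDiff_pd1 (contDiff_spc hsm 0)).continuous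
  have u1 := (contDiff_pd1 (contDiff_spc hsm 1)).continuous
  have w0 := (contDiff_pd2 (contDiff_spc hsm 0)).continuous
  have w1 := (contDiff_pd2 (contDiff_spc hsm 1)).continuous
  have m0 := (contDiff_pd1 (contDiff_pd2 (contDiff_spc hsm 0))).continuous
  have m1 := (contDiff_pd1 (contDiff_pd2 (contDiff_spc hsm 1))).continuous
  have hphi0 : Continuous (fun p : ℝ × ℝ => phi p 0) := c0
  have hphi1 : Continuous (fun p : ℝ × ℝ => phi p 1) := c1
  have hns : Continuous Complex.normSq := Complex.continuous_normSq
  unfold Wd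
  fun_prop

lemma continuous_Qd (hsm : ContDiff ℝ (⊤ : ℕ∞) phi) : Continuous (Qd phi) := by
  have c0 := (contDiff_spc hsm 0).continuous
  have c1 := (contDiff_spc hsm 1).continuous
  have u0 := (contDiff_pd1 (contDiff_spc hsm 0)).continuous
  have u1 := (contDiff_pd1 (contDiff_spc hsm 1)).continuous
  have w0 := (contDiff_pd2 (contDiff_spc hsm 0)).continuous
  have w1 := (contDiff_pd2 (contDiff_spc hsm 1)).continuous
  have n0 := (contDiff_pd2 (contDiff_pd1 (contDiff_spc hsm 0))).continuous
  have n1 := (contDiff_pd2 (contDiff_pd1 (contDiff_spc hsm 1))).continuous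
  have hphi0 : Continuous (fun p : ℝ × ℝ => phi p 0) := c0
  have hphi1 : Continuous (fun p : ℝ × ℝ => phi p 1) := c1
  unfold Qd
  fun_prop

end Main3
section Main4
variable {phi : ℝ × ℝ → Fin 2 → ℂ}

lemma continuous_nsq_comp {f : ℝ × ℝ → Fin 2 → ℂ} (hf : Continuous f) :
    Continuous (fun p => nsq (f p)) := by
  have : (fun p => nsq (f p))
      = fun p => Complex.normSq (f p 0) + Complex.normSq (f p 1) := by
    funext p; rw [nsq_two]
  rw [this]
  exact (Complex.continuous_normSq.comp ((continuous_apply 0).comp hf)).add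
    (Complex.continuous_normSq.comp ((continuous_apply 1).comp hf))

lemma continuous_mulVec_comp {M : Matrix (Fin 2) (Fin 2) ℂ} {f : ℝ × ℝ → Fin 2 → ℂ}
    (hf : Continuous f) : Continuous (fun p => M.mulVec (f p)) := by
  have : (fun p => M.mulVec (f p)) = fun p => M.mulVecLin (f p) := rfl
  rw [this]
  exact (LinearMap.continuous_of_finiteDimensional _).comp hf

lemma continuous_covE2 (hsm : ContDiff ℝ (⊤ : ℕ∞) phi) (hsupp : tsupport phi ⊆ sphereRect) :
    Continuous (covE2 phi) := by
  rw [continuous_iff_continuousAt]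
  intro p
  by_cases hp : p ∈ sphereRect
  · have hs : Real.sin p.1 ≠ 0 := ne_of_gt (Real.sin_pos_of_pos_of_lt_pi hp.1.1 hp.1.2)
    have hsin : Continuous (fun q : ℝ × ℝ => Real.sin q.1) := Real.continuous_sin.comp continuous_fst
    have hcos : Continuous (fun q : ℝ × ℝ => Real.cos q.1) := Real.continuous_cos.comp continuous_fst
    have h1 : ContinuousAt (fun q : ℝ × ℝ => (((Real.sin q.1)⁻¹ : ℝ) : ℂ)) p :=
      Complex.continuous_ofReal.continuousAt.comp (hsin.continuousAt.inv₀ hs)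
    have h2 : ContinuousAt (fun q : ℝ × ℝ =>
        (I * ((Real.cos q.1 / Real.sin q.1 / 2 : ℝ) : ℂ))) p := by
      apply continuousAt_const.mul
      exact Complex.continuous_ofReal.continuousAt.comp
        (((hcos.continuousAt.div hsin.continuousAt hs)).div_const 2)
    have hpd2 : Continuous (pdPhi phi) := (contDiff_pd2 hsm).continuous
    exact (h1.smul hpd2.continuousAt).add
      (h2.smul (continuous_mulVec_comp hsm.continuous).continuousAt)
  · have hpK : p ∉ tsupport phi := fun h => hp (hsupp h)
    have hopen : IsOpen (tsupport phi)ᶜ := (isClosed_tsupport phi).isOpen_compl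
    have hev : covE2 phi =ᶠ[nhds p] (fun _ => 0) := by
      filter_upwards [hopen.mem_nhds hpK] with q hq
      exact vanish_covE2 hq
    exact continuousAt_const.congr hev.symm

lemma continuous_slDs (hsm : ContDiff ℝ (⊤ : ℕ∞) phi) (hsupp : tsupport phi ⊆ sphereRect) :
    Continuous (slDs phi) := by
  rw [continuous_iff_continuousAt]
  intro p
  by_cases hp : p ∈ sphereRect
  · have hs : Real.sin p.1 ≠ 0 := ne_of_gt (Real.sin_pos_of_pos_of_lt_pi hp.1.1 hp.1.2)
    have hsin : Continuous (fun q : ℝ × ℝ => Real.sin q.1) := Real.continuous_sin.comp continuous_fst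
    have hcos : Continuous (fun q : ℝ × ℝ => Real.cos q.1) := Real.continuous_cos.comp continuous_fst
    have h2 : ContinuousAt (fun q : ℝ × ℝ => ((Real.cos q.1 / Real.sin q.1 / 2 : ℝ) : ℂ)) p :=
      Complex.continuous_ofReal.continuousAt.comp
        (((hcos.continuousAt.div hsin.continuousAt hs)).div_const 2)
    have h1 : ContinuousAt (fun q : ℝ × ℝ => (((Real.sin q.1)⁻¹ : ℝ) : ℂ)) p :=
      Complex.continuous_ofReal.continuousAt.comp (hsin.continuousAt.inv₀ hs)
    have hpd1 : Continuous (pdTheta phi) := (contDiff_pd1 hsm).continuous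
    have hpd2 : Continuous (pdPhi phi) := (contDiff_pd2 hsm).continuous
    have hmv : ∀ (M : Matrix (Fin 2) (Fin 2) ℂ) (g : ℝ × ℝ → Fin 2 → ℂ),
        ContinuousAt g p → ContinuousAt (fun q => M.mulVec (g q)) p := by
      intro M g hg
      have he : (fun q => M.mulVec (g q)) = fun q => M.mulVecLin (g q) := rfl
      rw [he]
      exact ((LinearMap.continuous_of_finiteDimensional _).continuousAt).comp hg
    apply ContinuousAt.sub
    · exact (continuousAt_const (y := I)).smul (hmv sigmaX _
        (hpd1.continuousAt.add (h2.smul hsm.continuous.continuousAt)))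
    · exact (continuousAt_const (y := I)).smul (hmv sigmaY _ (h1.smul hpd2.continuousAt))
  · have hpK : p ∉ tsupport phi := fun h => hp (hsupp h)
    have hopen : IsOpen (tsupport phi)ᶜ := (isClosed_tsupport phi).isOpen_compl
    have hev : slDs phi =ᶠ[nhds p] (fun _ => 0) := by
      filter_upwards [hopen.mem_nhds hpK] with q hq
      exact vanish_slDs hq
    exact continuousAt_const.congr hev.symm

end Main4
lemma nsq_nonneg (v : Fin 2 → ℂ) : 0 ≤ nsq v :=
  Finset.sum_nonneg fun _ _ => Complex.normSq_nonneg _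

/-- the two-sided estimate `‖slDs φ‖² ≤ N(φ) ≤ 2 ‖slDs φ‖²`,
i.e. `φ ↦ ‖slDs φ‖` is equivalent to the spinorial `H¹` norm. -/
theorem stmt14 (phi : ℝ × ℝ → Fin 2 → ℂ) (hsm : ContDiff ℝ (⊤ : ℕ∞) phi)
    (hcs : HasCompactSupport phi) (hsupp : tsupport phi ⊆ sphereRect) :
    (∫ p in sphereRect, nsq (slDs phi p) * Real.sin p.1) ≤ sobN phi ∧
      sobN phi ≤ 2 * ∫ p in sphereRect, nsq (slDs phi p) * Real.sin p.1 := by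
  have hRm : MeasurableSet sphereRect := measurableSet_Ioo.prod measurableSet_Ioo
  have hsinc : Continuous (fun p : ℝ × ℝ => Real.sin p.1) :=
    Real.continuous_sin.comp continuous_fst
  have mkint : ∀ f : ℝ × ℝ → Fin 2 → ℂ, Continuous f → (∀ p ∉ tsupport phi, f p = 0) →
      Integrable (fun p => nsq (f p) * Real.sin p.1) := by
    intro f hf h0
    apply ((continuous_nsq_comp hf).mul hsinc).integrable_of_hasCompactSupport
    apply HasCompactSupport.intro hcs
    intro p hp
    rw [Pi.mul_apply, h0 p hp]
    simp [nsq]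
  have hAint := mkint phi hsm.continuous (fun p hp => vanish_phi hp)
  have hBint := mkint (pdTheta phi) (contDiff_pd1 hsm).continuous (fun p hp => vanish_pdTheta hp)
  have hCint := mkint (covE2 phi) (continuous_covE2 hsm hsupp) (fun p hp => vanish_covE2 hp)
  have hWvan : ∀ p ∉ tsupport phi, Wd phi p = 0 := fun p hp =>
    deriv1_vanish (isClosed_tsupport phi) (hasDerivAt_Wfun hsm)
      (fun q hq => vanish_Wfun hq) hp
  have hQvan : ∀ p ∉ tsupport phi, Qd phi p = 0 := fun p hp =>
    deriv2_vanish (isClosed_tsupport phi) (hasDerivAt_Qfun hsm)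
      (fun q hq => vanish_Qfun hq) hp
  have hWint : Integrable (Wd phi) :=
    (continuous_Wd hsm).integrable_of_hasCompactSupport (HasCompactSupport.intro hcs hWvan)
  have hQint : Integrable (Qd phi) :=
    (continuous_Qd hsm).integrable_of_hasCompactSupport (HasCompactSupport.intro hcs hQvan)
  have hIW : ∫ p in sphereRect, Wd phi p = 0 := by
    rw [setIntegral_eq_integral_of_forall_compl_eq_zero
      (fun p hp => hWvan p (fun h => hp (hsupp h)))]
    exact integral_deriv1_zero hcs (hasDerivAt_Wfun hsm)
      (fun q hq => vanish_Wfun hq) (continuous_Wd hsm)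
  have hIQ : ∫ p in sphereRect, Qd phi p = 0 := by
    rw [setIntegral_eq_integral_of_forall_compl_eq_zero
      (fun p hp => hQvan p (fun h => hp (hsupp h)))]
    exact integral_deriv2_zero hcs (hasDerivAt_Qfun hsm)
      (fun q hq => vanish_Qfun hq) (continuous_Qd hsm)
  have hpt : Set.EqOn (fun p => nsq (slDs phi p) * Real.sin p.1)
      (fun p => (nsq (phi p) * Real.sin p.1) / 2 + nsq (pdTheta phi p) * Real.sin p.1
        + nsq (covE2 phi p) * Real.sin p.1 + (Wd phi p - Qd phi p)) sphereRect := by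
    intro p hp
    simp only
    rw [pointwise_identity hsm hp]
    ring
  have hDeq : (∫ p in sphereRect, nsq (slDs phi p) * Real.sin p.1)
      = (∫ p in sphereRect, nsq (phi p) * Real.sin p.1) / 2
        + (∫ p in sphereRect, nsq (pdTheta phi p) * Real.sin p.1)
        + (∫ p in sphereRect, nsq (covE2 phi p) * Real.sin p.1) := by
    rw [setIntegral_congr_fun hRm hpt]
    have h1 : IntegrableOn (fun p : ℝ × ℝ => nsq (phi p) * Real.sin p.1 / 2
        + nsq (pdTheta phi p) * Real.sin p.1 + nsq (covE2 phi p) * Real.sin p.1)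
        sphereRect volume :=
      ((hAint.integrableOn.div_const 2).add hBint.integrableOn).add hCint.integrableOn
    have h2 : IntegrableOn (fun p : ℝ × ℝ => Wd phi p - Qd phi p) sphereRect volume :=
      hWint.integrableOn.sub hQint.integrableOn
    have h3 : IntegrableOn (fun p : ℝ × ℝ => nsq (phi p) * Real.sin p.1 / 2
        + nsq (pdTheta phi p) * Real.sin p.1) sphereRect volume :=
      (hAint.integrableOn.div_const 2).add hBint.integrableOn
    have h4 : IntegrableOn (fun p : ℝ × ℝ => nsq (phi p) * Real.sin p.1 / 2)
        sphereRect volume := hAint.integrableOn.div_const 2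
    rw [integral_add h1 h2, integral_add h3 hCint.integrableOn,
      integral_add h4 hBint.integrableOn,
      integral_sub hWint.integrableOn hQint.integrableOn, hIW, hIQ, integral_div]
    ring
  have hsobeq : sobN phi
      = (∫ p in sphereRect, nsq (phi p) * Real.sin p.1)
        + (∫ p in sphereRect, nsq (pdTheta phi p) * Real.sin p.1)
        + (∫ p in sphereRect, nsq (covE2 phi p) * Real.sin p.1) := by
    rw [sobN]
    rw [setIntegral_congr_fun hRm (g := fun p => nsq (phi p) * Real.sin p.1
      + nsq (pdTheta phi p) * Real.sin p.1 + nsq (covE2 phi p) * Real.sin p.1)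
      (fun p _ => by simp only; ring)]
    have h5 : IntegrableOn (fun p : ℝ × ℝ => nsq (phi p) * Real.sin p.1
        + nsq (pdTheta phi p) * Real.sin p.1) sphereRect volume :=
      hAint.integrableOn.add hBint.integrableOn
    rw [integral_add h5 hCint.integrableOn, integral_add hAint.integrableOn hBint.integrableOn]
  have hpos : ∀ f : ℝ × ℝ → Fin 2 → ℂ,
      0 ≤ ∫ p in sphereRect, nsq (f p) * Real.sin p.1 := by
    intro f
    apply setIntegral_nonneg hRm
    intro p hp
    exact mul_nonneg (nsq_nonneg _) (Real.sin_nonneg_of_nonneg_of_le_pi hp.1.1.le hp.1.2.le)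
  have h0A := hpos phi
  have h0B := hpos (pdTheta phi)
  have h0C := hpos (covE2 phi)
  constructor
  · linarith
  · linarith
end
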